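/- For the action of a group of order 60 on words of length 12 over an alphabet by permuting positions via an embedding of the group into the symmetric group S12, the number of orbits of words with exactly two non-blank positions occupied by an unordered pair of distinct letters at adjacent faces equals the number of unordered pairs of letters times the number of orbits of adjacent face-pairs; in particular, if the group acts transitively on ordered pairs of adjacent faces, two such words related by swapping the two letters lie in the same orbit. -/
import Mathlib


/-- A group of order 60 acts on words of length 12 over an alphabet by
permuting positions via an embedding into the symmetric group on 12 letters.
The number of orbits of words whose exactly two non-blank positions are a pair
of adjacent faces carrying two distinct non-blank letters equals the number of
unordered pairs of distinct non-blank letters times the number of orbits of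
(unordered) adjacent face-pairs; in particular, since the group acts
transitively on ordered pairs of adjacent faces, two such words related by
swapping the two letters lie in the same orbit. -/
theorem word_orbits_adjacent_pairs {G A : Type*} [Group G] (hG : Nat.card G = 60)
    (φ : G →* Equiv.Perm (Fin 12)) (hφ : Function.Injective φ)
    (Adj : Fin 12 → Fin 12 → Prop) (hsym : ∀ i j, Adj i j → Adj j i)
    (hirr : ∀ i, ¬ Adj i i) (W : A)
    (htrans : ∀ i j i' j', Adj i j → Adj i' j' → ∃ g : G, φ g i = i' ∧ φ g j = j') :
    Nat.card {O : Set (Fin 12 → A) // ∃ w : Fin 12 → A,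
        (∃ i j x y, Adj i j ∧ x ≠ W ∧ y ≠ W ∧ x ≠ y ∧
          w = Function.update (Function.update (fun _ => W) i x) j y) ∧
        O = {w' | ∃ g : G, w' = w ∘ ⇑(φ g)}} =
      Nat.card {s : Set A // ∃ x y, x ≠ y ∧ x ≠ W ∧ y ≠ W ∧ s = {x, y}} *
        Nat.card {O : Set (Set (Fin 12)) // ∃ i j, Adj i j ∧
          O = {t | ∃ g : G, t = ⇑(φ g) '' {i, j}}} ∧
    ∀ (x y : A) (i j : Fin 12), x ≠ W → y ≠ W → x ≠ y → Adj i j →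
      ∃ g : G, Function.update (Function.update (fun _ => W) i x) j y ∘ ⇑(φ g) =
        Function.update (Function.update (fun _ => W) i y) j x := by
  classical
  -- notation for the basic words
  let ww : Fin 12 → Fin 12 → A → A → (Fin 12 → A) := fun i j x y =>
    Function.update (Function.update (fun _ => W) i x) j y
  have hne : ∀ i j : Fin 12, Adj i j → i ≠ j := fun i j h hij => hirr j (hij ▸ h)
  have hval_j : ∀ (i j : Fin 12) (x y : A), ww i j x y j = y := by
    intro i j x y; simp [ww]
  have hval_i : ∀ (i j : Fin 12) (x y : A), i ≠ j → ww i j x y i = x := by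
    intro i j x y hij
    simp [ww, Function.update_of_ne hij]
  have hval_k : ∀ (i j k : Fin 12) (x y : A), k ≠ i → k ≠ j → ww i j x y k = W := by
    intro i j k x y hki hkj
    simp [ww, Function.update_of_ne hkj, Function.update_of_ne hki]
  -- moving a word along the group action
  have hmove : ∀ (i j i' j' : Fin 12) (x y : A), Adj i j → Adj i' j' →
      ∃ g : G, ww i' j' x y ∘ ⇑(φ g) = ww i j x y := by
    intro i j i' j' x y h h'
    obtain ⟨g, hgi, hgj⟩ := htrans i j i' j' h h'
    refine ⟨g, funext fun k => ?_⟩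
    show ww i' j' x y (φ g k) = ww i j x y k
    by_cases hkj : k = j
    · rw [hkj, hgj, hval_j, hval_j]
    · by_cases hki : k = i
      · rw [hki, hgi, hval_i i' j' x y (hne _ _ h'), hval_i i j x y (hne _ _ h)]
      · have h1 : φ g k ≠ i' := fun hc => hki ((φ g).injective (hc.trans hgi.symm))
        have h2 : φ g k ≠ j' := fun hc => hkj ((φ g).injective (hc.trans hgj.symm))
        rw [hval_k i' j' _ x y h1 h2, hval_k i j k x y hki hkj]
  -- swapping the two letters
  have hswap : ∀ (x y : A) (i j : Fin 12), Adj i j →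
      ∃ g : G, ww i j x y ∘ ⇑(φ g) = ww i j y x := by
    intro x y i j h
    have hij := hne i j h
    obtain ⟨g, hgi, hgj⟩ := htrans i j j i h (hsym i j h)
    refine ⟨g, funext fun k => ?_⟩
    show ww i j x y (φ g k) = ww i j y x k
    by_cases hkj : k = j
    · rw [hkj, hgj, hval_i i j x y hij, hval_j]
    · by_cases hki : k = i
      · rw [hki, hgi, hval_j, hval_i i j y x hij]
      · have h1 : φ g k ≠ j := fun hc => hki ((φ g).injective (hc.trans hgi.symm))
        have h2 : φ g k ≠ i := fun hc => hkj ((φ g).injective (hc.trans hgj.symm))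
        rw [hval_k i j _ x y h2 h1, hval_k i j k y x hki hkj]
  -- equality of orbits
  have horbit_eq : ∀ w1 w2 : Fin 12 → A, (∃ g : G, w1 = w2 ∘ ⇑(φ g)) →
      {w' | ∃ g : G, w' = w1 ∘ ⇑(φ g)} = {w' | ∃ g : G, w' = w2 ∘ ⇑(φ g)} := by
    intro w1 w2 ⟨g0, hg0⟩
    ext w'
    constructor
    · rintro ⟨g, rfl⟩
      refine ⟨g0 * g, ?_⟩
      rw [hg0, map_mul]
      rfl
    · rintro ⟨g, rfl⟩
      refine ⟨g0⁻¹ * g, ?_⟩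
      rw [hg0, map_mul, map_inv]
      ext k
      simp
  -- range of a basic word
  have hthird : ∀ i j : Fin 12, ∃ k : Fin 12, k ≠ i ∧ k ≠ j := by
    intro i j
    by_contra hcon
    push_neg at hcon
    have hall : ∀ k : Fin 12, k = i ∨ k = j := fun k => by
      by_cases hk : k = i
      · exact Or.inl hk
      · exact Or.inr (hcon k hk)
    rcases hall 0 with h0 | h0 <;> rcases hall 1 with h1 | h1 <;>
      rcases hall 2 with h2 | h2 <;>
      first
      | exact absurd (h0.trans h1.symm) (by decide)
      | exact absurd (h0.trans h2.symm) (by decide)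
      | exact absurd (h1.trans h2.symm) (by decide)
  have hrange : ∀ (i j : Fin 12) (x y : A), i ≠ j →
      Set.range (ww i j x y) = {W, x, y} := by
    intro i j x y hij
    ext a
    constructor
    · rintro ⟨k, rfl⟩
      by_cases hkj : k = j
      · rw [hkj, hval_j]; right; right; rfl
      · by_cases hki : k = i
        · rw [hki, hval_i i j x y hij]; right; left; rfl
        · rw [hval_k i j k x y hki hkj]; left; rfl
    · rintro (rfl | rfl | rfl)
      · obtain ⟨k, hki, hkj⟩ := hthird i j
        exact ⟨k, hval_k i j k x y hki hkj⟩
      · exact ⟨i, hval_i i j a y hij⟩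
      · exact ⟨j, hval_j i j x a⟩
  -- letter set extracted from an orbit
  have hletters : ∀ (O : Set (Fin 12 → A)) (i j : Fin 12) (x y : A), Adj i j →
      x ≠ W → y ≠ W → O = {w' | ∃ g : G, w' = ww i j x y ∘ ⇑(φ g)} →
      (⋃ w' ∈ O, Set.range w') \ {W} = {x, y} := by
    intro O i j x y hadj hx hy hO
    have hbu : (⋃ w' ∈ O, Set.range w') = Set.range (ww i j x y) := by
      apply Set.Subset.antisymm
      · apply Set.iUnion₂_subset
        rintro w' hw'
        rw [hO] at hw'
        obtain ⟨g, rfl⟩ := hw'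
        rw [(φ g).surjective.range_comp]
      · have hmem : ww i j x y ∈ O := by
          rw [hO]
          exact ⟨1, by simp⟩
        exact Set.subset_biUnion_of_mem hmem
    rw [hbu, hrange i j x y (hne i j hadj)]
    ext a
    simp only [Set.mem_diff, Set.mem_insert_iff, Set.mem_singleton_iff]
    constructor
    · rintro ⟨(rfl | rfl | rfl), ha⟩
      · exact absurd rfl ha
      · exact Or.inl rfl
      · exact Or.inr rfl
    · rintro (rfl | rfl)
      · exact ⟨Or.inr (Or.inl rfl), hx⟩
      · exact ⟨Or.inr (Or.inr rfl), hy⟩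
  constructor
  · by_cases hA : ∃ i j : Fin 12, Adj i j
    · obtain ⟨i0, j0, hadj0⟩ := hA
      -- the face-pair orbit count is 1
      have hface : Nat.card {O : Set (Set (Fin 12)) // ∃ i j, Adj i j ∧
          O = {t | ∃ g : G, t = ⇑(φ g) '' {i, j}}} = 1 := by
        rw [Nat.card_eq_one_iff_unique]
        have huniq : ∀ (O : Set (Set (Fin 12))) (i j : Fin 12), Adj i j →
            O = {t | ∃ g : G, t = ⇑(φ g) '' {i, j}} →
            O = {t | ∃ g : G, t = ⇑(φ g) '' {i0, j0}} := by
          intro O i j hadj hO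
          subst hO
          obtain ⟨g0, hg0i, hg0j⟩ := htrans i0 j0 i j hadj0 hadj
          ext t
          constructor
          · rintro ⟨g, rfl⟩
            refine ⟨g * g0, ?_⟩
            rw [map_mul]
            simp only [Equiv.Perm.coe_mul, Set.image_comp, Set.image_pair,
              Function.comp_apply, hg0i, hg0j]
          · rintro ⟨g, rfl⟩
            obtain ⟨g1, hg1i, hg1j⟩ := htrans i j i0 j0 hadj hadj0
            refine ⟨g * g1, ?_⟩
            rw [map_mul]
            simp only [Equiv.Perm.coe_mul, Set.image_comp, Set.image_pair,
              Function.comp_apply, hg1i, hg1j]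
        refine ⟨⟨fun a b => ?_⟩, ⟨⟨{t | ∃ g : G, t = ⇑(φ g) '' {i0, j0}},
          i0, j0, hadj0, rfl⟩⟩⟩
        obtain ⟨Oa, ia, ja, ha, hOa⟩ := a
        obtain ⟨Ob, ib, jb, hb, hOb⟩ := b
        exact Subtype.ext ((huniq Oa ia ja ha hOa).trans (huniq Ob ib jb hb hOb).symm)
      rw [hface, mul_one]
      -- bijection between word orbits and letter pairs
      have hbij : Nat.card {O : Set (Fin 12 → A) // ∃ w : Fin 12 → A,
          (∃ i j x y, Adj i j ∧ x ≠ W ∧ y ≠ W ∧ x ≠ y ∧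
            w = Function.update (Function.update (fun _ => W) i x) j y) ∧
          O = {w' | ∃ g : G, w' = w ∘ ⇑(φ g)}} =
          Nat.card {s : Set A // ∃ x y, x ≠ y ∧ x ≠ W ∧ y ≠ W ∧ s = {x, y}} := by
        apply Nat.card_eq_of_bijective
          (fun Oo => ⟨(⋃ w' ∈ Oo.1, Set.range w') \ {W}, by
            obtain ⟨O, hO⟩ := Oo
            obtain ⟨w, ⟨i, j, x, y, hadj, hx, hy, hxy, hw⟩, hOw⟩ := hO
            subst hw
            exact ⟨x, y, hxy, hx, hy, hletters O i j x y hadj hx hy hOw⟩⟩)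
        constructor
        · rintro ⟨O1, h1⟩ ⟨O2, h2⟩ heq
          obtain ⟨w1, ⟨i1, j1, x1, y1, hadj1, hx1, hy1, hxy1, hw1⟩, hO1⟩ := h1
          obtain ⟨w2, ⟨i2, j2, x2, y2, hadj2, hx2, hy2, hxy2, hw2⟩, hO2⟩ := h2
          subst hw1; subst hw2
          have hs : ({x1, y1} : Set A) = {x2, y2} := by
            rw [← hletters O1 i1 j1 x1 y1 hadj1 hx1 hy1 hO1,
              ← hletters O2 i2 j2 x2 y2 hadj2 hx2 hy2 hO2]
            exact congrArg Subtype.val heq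
          apply Subtype.ext
          show O1 = O2
          rw [hO1, hO2]
          rcases Set.pair_eq_pair_iff.mp hs with ⟨rfl, rfl⟩ | ⟨rfl, rfl⟩
          · obtain ⟨g, hg⟩ := hmove i1 j1 i2 j2 x1 y1 hadj1 hadj2
            exact horbit_eq _ _ ⟨g, hg.symm⟩
          · obtain ⟨g, hg⟩ := hmove i1 j1 i2 j2 x1 y1 hadj1 hadj2
            obtain ⟨g', hg'⟩ := hswap y1 x1 i2 j2 hadj2
            have : ww i1 j1 x1 y1 = (ww i2 j2 y1 x1 ∘ ⇑(φ g')) ∘ ⇑(φ g) := by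
              rw [hg', hg]
            refine (horbit_eq _ _ ⟨g' * g, ?_⟩)
            show ww i1 j1 x1 y1 = ww i2 j2 y1 x1 ∘ ⇑(φ (g' * g))
            rw [this, map_mul]
            rfl
        · rintro ⟨s, x, y, hxy, hx, hy, hs⟩
          refine ⟨⟨{w' | ∃ g : G, w' = ww i0 j0 x y ∘ ⇑(φ g)},
            ww i0 j0 x y, ⟨i0, j0, x, y, hadj0, hx, hy, hxy, rfl⟩, rfl⟩, ?_⟩
          apply Subtype.ext
          simp only
          rw [hletters _ i0 j0 x y hadj0 hx hy rfl, hs]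
      exact hbij
    · push_neg at hA
      have h1 : Nat.card {O : Set (Fin 12 → A) // ∃ w : Fin 12 → A,
          (∃ i j x y, Adj i j ∧ x ≠ W ∧ y ≠ W ∧ x ≠ y ∧
            w = Function.update (Function.update (fun _ => W) i x) j y) ∧
          O = {w' | ∃ g : G, w' = w ∘ ⇑(φ g)}} = 0 := by
        rw [Nat.card_eq_zero]
        left
        refine ⟨fun x => ?_⟩
        obtain ⟨O, w, hw, hO⟩ := x
        obtain ⟨i, j, x1, y1, hadj, _⟩ := hw
        exact hA i j hadj
      have h2 : Nat.card {O : Set (Set (Fin 12)) // ∃ i j, Adj i j ∧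
          O = {t | ∃ g : G, t = ⇑(φ g) '' {i, j}}} = 0 := by
        rw [Nat.card_eq_zero]
        left
        refine ⟨fun x => ?_⟩
        obtain ⟨_, i, j, hadj, _⟩ := x
        exact hA i j hadj
      rw [h1, h2, mul_zero]
  · intro x y i j hx hy hxy hadj
    exact hswap x y i j hadj
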